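/- arXiv:2508.14194 — 10 statements merged into one kernel-verified Lean document; each statement's English description precedes it below -/
import Mathlib

section
/- Every Pareto optimal roommate assignment is 4-person stable. -/
/-- A roommate assignment: each agent has a roommate (`mate`) and a room (`room`);
roommates share a room and each room hosts exactly one pair. -/
structure Assignment (A R : Type*) where
  mate : A → A
  room : A → R
  mate_ne_self : ∀ i, mate i ≠ i
  mate_invol : ∀ i, mate (mate i) = i
  room_mate : ∀ i, room (mate i) = room i
  room_eq_iff : ∀ i j, room i = room j ↔ (j = i ∨ j = mate i)

variable {A R : Type*}

/-- Utility of agent `i` in assignment `μ`: happiness for the roommate plus value of the room. -/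
def util (h : A → A → ℝ) (v : A → R → ℝ) (μ : Assignment A R) (i : A) : ℝ :=
  h i (μ.mate i) + v i (μ.room i)

/-- `(i,j)` is a 2-person-stable blocking pair: they live in different rooms and both would
strictly gain by swapping places. -/
def blocking2PS (h : A → A → ℝ) (v : A → R → ℝ) (μ : Assignment A R) (i j : A) : Prop :=
  μ.room i ≠ μ.room j ∧
  h i (μ.mate j) + v i (μ.room j) > h i (μ.mate i) + v i (μ.room i) ∧
  h j (μ.mate i) + v j (μ.room i) > h j (μ.mate j) + v j (μ.room j)

/-- `(i,j)` is a 4-person-stable blocking pair: in addition, both displaced roommates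
strictly prefer their new roommate. -/
def blocking4PS (h : A → A → ℝ) (v : A → R → ℝ) (μ : Assignment A R) (i j : A) : Prop :=
  blocking2PS h v μ i j ∧
  h (μ.mate i) j > h (μ.mate i) i ∧
  h (μ.mate j) i > h (μ.mate j) j

def is2PS (h : A → A → ℝ) (v : A → R → ℝ) (μ : Assignment A R) : Prop :=
  ∀ i j, ¬ blocking2PS h v μ i j

def is4PS (h : A → A → ℝ) (v : A → R → ℝ) (μ : Assignment A R) : Prop :=
  ∀ i j, ¬ blocking4PS h v μ i j

/-- `μ'` Pareto dominates `μ`. -/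
def ParetoDom (h : A → A → ℝ) (v : A → R → ℝ) (μ' μ : Assignment A R) : Prop :=
  (∀ i, util h v μ i ≤ util h v μ' i) ∧ ∃ i, util h v μ i < util h v μ' i

def ParetoOpt (h : A → A → ℝ) (v : A → R → ℝ) (μ : Assignment A R) : Prop :=
  ∀ μ', ¬ ParetoDom h v μ' μ

/-- `μ'` is the result of swapping agents `i` and `j` in `μ`. -/
def IsSwap (μ μ' : Assignment A R) (i j : A) : Prop :=
  μ'.mate i = μ.mate j ∧ μ'.room i = μ.room j ∧
  μ'.mate j = μ.mate i ∧ μ'.room j = μ.room i ∧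
  μ'.room (μ.mate i) = μ.room i ∧ μ'.room (μ.mate j) = μ.room j ∧
  ∀ k, k ≠ i → k ≠ j → k ≠ μ.mate i → k ≠ μ.mate j →
    μ'.mate k = μ.mate k ∧ μ'.room k = μ.room k

/-- Social welfare: the sum of all agents' utilities. -/
noncomputable def SW [Fintype A] (h : A → A → ℝ) (v : A → R → ℝ) (μ : Assignment A R) : ℝ :=
  ∑ i, util h v μ i

/-! If `(i, j)` is a 4PS blocking pair, let `i` and `j` exchange places. Then `i` and `j` gain
by the 2PS conditions, their former roommates gain by the two extra 4PS conditions (each keeps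
their room), and every other agent keeps both roommate and room: a Pareto improvement. -/

namespace Assignment

variable (μ : Assignment A R)

theorem mate_involutive : Function.Involutive μ.mate := μ.mate_invol

theorem mate_ne_of_room_ne {i j : A} (hr : μ.room i ≠ μ.room j) : μ.mate i ≠ j := by
  rintro rfl
  exact hr (μ.room_mate i).symm

/-- Relabel the agents of `μ` by an involution `σ`: agent `k` takes the place of `σ k`. -/
def conj (σ : A → A) (hσ : Function.Involutive σ) : Assignment A R where
  mate k := σ (μ.mate (σ k))
  room k := μ.room (σ k)
  mate_ne_self k hk := μ.mate_ne_self (σ k) (hσ.eq_iff.mp hk)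
  mate_invol k := by simp only [hσ _, μ.mate_invol]
  room_mate k := by simp only [hσ _, μ.room_mate]
  room_eq_iff k l := by rw [μ.room_eq_iff, hσ.injective.eq_iff, hσ.eq_iff]

def swapAgents [DecidableEq A] (i j : A) : Assignment A R :=
  μ.conj (Equiv.swap i j) (Equiv.swap_apply_self i j)

theorem swapAgents_comm [DecidableEq A] (i j : A) : μ.swapAgents i j = μ.swapAgents j i := by
  unfold swapAgents
  congr 1
  rw [Equiv.swap_comm]

end Assignment

open Assignment

theorem util_mate (h : A → A → ℝ) (v : A → R → ℝ) (μ : Assignment A R) (k : A) :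
    util h v μ (μ.mate k) = h (μ.mate k) k + v (μ.mate k) (μ.room (μ.mate k)) := by
  rw [util, μ.mate_invol]

section SwapUtility

variable [DecidableEq A] (h : A → A → ℝ) (v : A → R → ℝ) (μ : Assignment A R) {i j : A}

theorem util_swapAgents_left (hr : μ.room i ≠ μ.room j) :
    util h v (μ.swapAgents i j) i = h i (μ.mate j) + v i (μ.room j) := by
  have hj' : Equiv.swap i j (μ.mate j) = μ.mate j :=
    Equiv.swap_apply_of_ne_of_ne (μ.mate_ne_of_room_ne (Ne.symm hr)) (μ.mate_ne_self j)
  simp only [util, swapAgents, conj, Equiv.swap_apply_left, hj']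

theorem util_swapAgents_mate_left (hr : μ.room i ≠ μ.room j) :
    util h v (μ.swapAgents i j) (μ.mate i) =
      h (μ.mate i) j + v (μ.mate i) (μ.room (μ.mate i)) := by
  have hi' : Equiv.swap i j (μ.mate i) = μ.mate i :=
    Equiv.swap_apply_of_ne_of_ne (μ.mate_ne_self i) (μ.mate_ne_of_room_ne hr)
  simp only [util, swapAgents, conj, hi', μ.mate_invol, Equiv.swap_apply_left]

theorem util_swapAgents_of_ne (k : A) (hki : k ≠ i) (hkj : k ≠ j) (hki' : k ≠ μ.mate i)
    (hkj' : k ≠ μ.mate j) : util h v (μ.swapAgents i j) k = util h v μ k := by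
  have hk : Equiv.swap i j k = k := Equiv.swap_apply_of_ne_of_ne hki hkj
  have hk' : Equiv.swap i j (μ.mate k) = μ.mate k :=
    Equiv.swap_apply_of_ne_of_ne (fun e => hki' (μ.mate_involutive.eq_iff.mp e))
      (fun e => hkj' (μ.mate_involutive.eq_iff.mp e))
  simp only [util, swapAgents, conj, hk, hk']

theorem paretoDom_swapAgents_of_blocking4PS (hb : blocking4PS h v μ i j) :
    ParetoDom h v (μ.swapAgents i j) μ := by
  obtain ⟨⟨hr, hi, hj⟩, hi', hj'⟩ := hb
  have gain_i : util h v μ i < util h v (μ.swapAgents i j) i := by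
    rw [util_swapAgents_left h v μ hr]; exact hi
  refine ⟨fun k => ?_, i, gain_i⟩
  by_cases hki : k = i
  · exact hki ▸ gain_i.le
  by_cases hkj : k = j
  · rw [hkj, swapAgents_comm, util_swapAgents_left h v μ (Ne.symm hr)]; exact hj.le
  by_cases hki' : k = μ.mate i
  · rw [hki', util_swapAgents_mate_left h v μ hr, util_mate]; linarith
  by_cases hkj' : k = μ.mate j
  · rw [hkj', swapAgents_comm, util_swapAgents_mate_left h v μ (Ne.symm hr), util_mate]; linarith
  exact (util_swapAgents_of_ne h v μ k hki hkj hki' hkj').ge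

end SwapUtility

/-- Every Pareto optimal roommate assignment is 4-person stable. -/
theorem paretoOpt_is4PS (h : A → A → ℝ) (v : A → R → ℝ) (μ : Assignment A R)
    (hpo : ParetoOpt h v μ) : is4PS h v μ := by
  classical
  exact fun _ _ hb => hpo _ (paretoDom_swapAgents_of_blocking4PS h v μ hb)
end

section
/- Resolving a 4PS blocking pair by swapping the two blocking agents yields an assignment that Pareto dominates the original; hence a maximum-social-welfare assignment is 4-person stable. -/
variable {A R : Type*}

/-- Conjugate an assignment by the transposition of `i` and `j`. -/
noncomputable def swapAssign (μ : Assignment A R) (i j : A) : Assignment A R := by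
  classical
  exact
  { mate := fun k => Equiv.swap i j (μ.mate (Equiv.swap i j k))
    room := fun k => μ.room (Equiv.swap i j k)
    mate_ne_self := by
      intro k hk
      have : μ.mate (Equiv.swap i j k) = Equiv.swap i j k :=
        (Equiv.swap i j).injective (by simpa using hk)
      exact μ.mate_ne_self _ this
    mate_invol := by
      intro k
      simp [Equiv.swap_apply_self, μ.mate_invol]
    room_mate := by
      intro k
      simp [Equiv.swap_apply_self, μ.room_mate]
    room_eq_iff := by
      intro k l
      rw [μ.room_eq_iff]
      constructor
      · rintro (hc | hc)
        · exact Or.inl ((Equiv.swap i j).injective hc)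
        · refine Or.inr ?_
          have := congrArg (Equiv.swap i j) hc
          rw [Equiv.swap_apply_self] at this
          exact this
      · rintro (rfl | rfl)
        · exact Or.inl rfl
        · exact Or.inr (by simp [Equiv.swap_apply_self]) }

lemma isSwap_swapAssign (μ : Assignment A R) (i j : A)
    (hij : i ≠ j) (h1 : μ.mate i ≠ j) (h2 : μ.mate j ≠ i) :
    IsSwap μ (swapAssign μ i j) i j := by
  classical
  have si : Equiv.swap i j i = j := Equiv.swap_apply_left i j
  have sj : Equiv.swap i j j = i := Equiv.swap_apply_right i j
  have smi : Equiv.swap i j (μ.mate i) = μ.mate i :=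
    Equiv.swap_apply_of_ne_of_ne (μ.mate_ne_self i) h1
  have smj : Equiv.swap i j (μ.mate j) = μ.mate j :=
    Equiv.swap_apply_of_ne_of_ne h2 (μ.mate_ne_self j)
  refine ⟨?_, ?_, ?_, ?_, ?_, ?_, ?_⟩
  · show Equiv.swap i j (μ.mate (Equiv.swap i j i)) = _
    rw [si, smj]
  · show μ.room (Equiv.swap i j i) = _; rw [si]
  · show Equiv.swap i j (μ.mate (Equiv.swap i j j)) = _
    rw [sj, smi]
  · show μ.room (Equiv.swap i j j) = _; rw [sj]
  · show μ.room (Equiv.swap i j (μ.mate i)) = _; rw [smi, μ.room_mate]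
  · show μ.room (Equiv.swap i j (μ.mate j)) = _; rw [smj, μ.room_mate]
  · intro k hki hkj hkmi hkmj
    have sk : Equiv.swap i j k = k := Equiv.swap_apply_of_ne_of_ne hki hkj
    have hmk : Equiv.swap i j (μ.mate k) = μ.mate k := by
      refine Equiv.swap_apply_of_ne_of_ne ?_ ?_
      · intro hc; exact hkmi (by rw [← hc, μ.mate_invol])
      · intro hc; exact hkmj (by rw [← hc, μ.mate_invol])
    constructor
    · show Equiv.swap i j (μ.mate (Equiv.swap i j k)) = _; rw [sk, hmk]
    · show μ.room (Equiv.swap i j k) = _; rw [sk]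

lemma pareto_of_swap (h : A → A → ℝ) (v : A → R → ℝ) (μ μ' : Assignment A R) (i j : A)
    (hb : blocking4PS h v μ i j) (hs : IsSwap μ μ' i j) : ParetoDom h v μ' μ := by
  classical
  obtain ⟨⟨hroom, hi, hj⟩, hmi, hmj⟩ := hb
  obtain ⟨mi, ri, mj, rj, rmi, rmj, hrest⟩ := hs
  have hij : i ≠ j := fun e => hroom (by rw [e])
  have h1 : μ.mate i ≠ j := fun e => hroom (by rw [← e, μ.room_mate])
  have h2 : μ.mate j ≠ i := fun e => hroom (by rw [← e, μ.room_mate])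
  have hmimj : μ.mate i ≠ μ.mate j := fun e => hij (by
    have := congrArg μ.mate e; rwa [μ.mate_invol, μ.mate_invol] at this)
  have hmii : μ'.mate (μ.mate i) = j := by
    have := congrArg μ'.mate mj
    rw [μ'.mate_invol] at this
    exact this.symm
  have hmjj : μ'.mate (μ.mate j) = i := by
    have := congrArg μ'.mate mi
    rw [μ'.mate_invol] at this
    exact this.symm
  have key : ∀ k, util h v μ k ≤ util h v μ' k := by
    intro k
    by_cases hk1 : k = i
    · subst hk1; unfold util; rw [mi, ri]; exact le_of_lt hi
    by_cases hk2 : k = j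
    · subst hk2; unfold util; rw [mj, rj]; exact le_of_lt hj
    by_cases hk3 : k = μ.mate i
    · subst hk3; unfold util
      rw [hmii, rmi, μ.room_mate, μ.mate_invol]
      exact add_le_add (le_of_lt hmi) le_rfl
    by_cases hk4 : k = μ.mate j
    · subst hk4; unfold util
      rw [hmjj, rmj, μ.room_mate, μ.mate_invol]
      exact add_le_add (le_of_lt hmj) le_rfl
    · obtain ⟨e1, e2⟩ := hrest k hk1 hk2 hk3 hk4
      unfold util; rw [e1, e2]
  exact ⟨key, i, by unfold util; rw [mi, ri]; exact hi⟩

/-- Resolving a 4PS blocking pair by swapping the two blocking agents yields an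
assignment that Pareto dominates the original; hence a maximum-social-welfare assignment
is 4-person stable. -/
theorem swap_of_blocking4PS_dominates [Fintype A] (h : A → A → ℝ) (v : A → R → ℝ) :
    (∀ (μ μ' : Assignment A R) (i j : A),
      blocking4PS h v μ i j → IsSwap μ μ' i j → ParetoDom h v μ' μ) ∧
    (∀ μ : Assignment A R, (∀ μ'' : Assignment A R, SW h v μ'' ≤ SW h v μ) → is4PS h v μ) := by
  classical
  refine ⟨fun μ μ' i j hb hs => pareto_of_swap h v μ μ' i j hb hs, ?_⟩
  intro μ hmax i j hb
  have hroom := hb.1.1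
  have hij : i ≠ j := fun e => hroom (by rw [e])
  have h1 : μ.mate i ≠ j := fun e => hroom (by rw [← e, μ.room_mate])
  have h2 : μ.mate j ≠ i := fun e => hroom (by rw [← e, μ.room_mate])
  have hdom := pareto_of_swap h v μ (swapAssign μ i j) i j hb
    (isSwap_swapAssign μ i j hij h1 h2)
  obtain ⟨hle, k, hk⟩ := hdom
  have : SW h v μ < SW h v (swapAssign μ i j) :=
    Finset.sum_lt_sum (fun m _ => hle m) ⟨k, Finset.mem_univ k, hk⟩
  exact absurd (hmax (swapAssign μ i j)) (not_le.mpr this)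
end

section
/- There exists a 4-person stable assignment that is not Pareto optimal. Concretely: with agents a,b,c,d and rooms r1,r2, where h_a(b)=1, h_b(c)=2, h_c(d)=1, h_d(c)=1 and all other agent-values 0, and v_a(r2)=v_b(r2)=1, v_c(r1)=v_d(r1)=1 with all other room-values 0, the assignment {(a,b,r1),(c,d,r2)} is 4PS but is Pareto dominated by {(c,d,r1),(a,b,r2)}. -/
variable {A R : Type*}

/-- Happiness values of Example 1 (4PS but not PO): agents a,b,c,d = 0,1,2,3. -/
def hEx2 : Fin 4 → Fin 4 → ℝ := ![![0,1,0,0], ![0,0,2,0], ![0,0,0,1], ![0,0,1,0]]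

/-- Room values: rooms r1,r2 = 0,1. -/
def vEx2 : Fin 4 → Fin 2 → ℝ := ![![0,1], ![0,1], ![1,0], ![1,0]]

/-- μ1 = {(a,b,r1),(c,d,r2)}. -/
def μEx2 : Assignment (Fin 4) (Fin 2) :=
  ⟨![1,0,3,2], ![0,0,1,1], by decide, by decide, by decide, by decide⟩

/-- μ2 = {(c,d,r1),(a,b,r2)}. -/
def μEx2' : Assignment (Fin 4) (Fin 2) :=
  ⟨![1,0,3,2], ![1,1,0,0], by decide, by decide, by decide, by decide⟩

/-- There exists a 4PS assignment that is not Pareto optimal: concretely,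
`μEx2` is 4-person stable but Pareto dominated by `μEx2'`. -/
theorem fourPS_not_paretoOpt :
    is4PS hEx2 vEx2 μEx2 ∧ ParetoDom hEx2 vEx2 μEx2' μEx2 ∧ ¬ ParetoOpt hEx2 vEx2 μEx2 := by
  refine ⟨?_, ?_, ?_⟩
  · intro i j hb
    obtain ⟨⟨hr, h1, h2⟩, h3, h4⟩ := hb
    fin_cases i <;> fin_cases j <;>
      simp_all [hEx2, vEx2, μEx2, Matrix.cons_val_zero, Matrix.cons_val_one] <;> norm_num at *
  · constructor
    · intro i
      fin_cases i <;> norm_num [util, hEx2, vEx2, μEx2, μEx2']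
    · exact ⟨0, by norm_num [util, hEx2, vEx2, μEx2, μEx2']⟩
  · intro h
    exact h μEx2' ⟨fun i => by fin_cases i <;> norm_num [util, hEx2, vEx2, μEx2, μEx2'],
      ⟨0, by norm_num [util, hEx2, vEx2, μEx2, μEx2']⟩⟩
end

section
/- The serial dictatorship algorithm outputs a 4-person stable assignment: if agents are processed in a fixed order, and each unmatched agent in turn picks its most preferred remaining agent as roommate and most preferred remaining room, the resulting assignment has no 4PS blocking pair. -/
variable {A R : Type*}

/-- The picker (dominant agent) of the triple containing `i`: the member of the pair with
higher priority (smaller `σ`). -/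
def pk (σ : A → ℕ) (μ : Assignment A R) (i : A) : A :=
  if σ i < σ (μ.mate i) then i else μ.mate i

/-- The defining invariant of the output of serial dictatorship with priority order `σ`:
each picker weakly prefers its chosen roommate (resp. room) to every agent (resp. room)
belonging to a later-formed triple. -/
def SDInv (σ : A → ℕ) (h : A → A → ℝ) (v : A → R → ℝ) (μ : Assignment A R) : Prop :=
  ∀ i, σ i < σ (μ.mate i) →
    ∀ j, σ i < σ (pk σ μ j) →
      h i (μ.mate i) ≥ h i j ∧ v i (μ.room i) ≥ v i (μ.room j)

lemma pk_mate (σ : A → ℕ) (hσ : Function.Injective σ) (μ : Assignment A R) (i : A) :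
    pk σ μ (μ.mate i) = pk σ μ i := by
  unfold pk
  rw [μ.mate_invol]
  have hne : σ i ≠ σ (μ.mate i) := fun e => (μ.mate_ne_self i) (hσ e).symm
  rcases lt_or_gt_of_ne hne with h1 | h1
  · rw [if_neg (not_lt.mpr h1.le), if_pos h1]
  · rw [if_pos h1, if_neg (not_lt.mpr h1.le)]

lemma room_pk (σ : A → ℕ) (μ : Assignment A R) (i : A) :
    μ.room (pk σ μ i) = μ.room i := by
  unfold pk; split
  · rfl
  · exact μ.room_mate i

lemma sd_key (σ : A → ℕ) (hσ : Function.Injective σ)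
    (h : A → A → ℝ) (v : A → R → ℝ) (μ : Assignment A R)
    (hsd : SDInv σ h v μ) (i j : A)
    (hlt : σ (pk σ μ i) < σ (pk σ μ j))
    (hi : h i (μ.mate j) + v i (μ.room j) > h i (μ.mate i) + v i (μ.room i))
    (hi' : h (μ.mate i) j > h (μ.mate i) i) : False := by
  by_cases hc : σ i < σ (μ.mate i)
  · have hp : pk σ μ i = i := if_pos hc
    rw [hp] at hlt
    have H1 := hsd i hc (μ.mate j) (by rw [pk_mate σ hσ]; exact hlt)
    rw [μ.room_mate] at H1
    linarith [H1.1, H1.2]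
  · have hne : σ (μ.mate i) ≠ σ i := fun e => (μ.mate_ne_self i) (hσ e)
    have hc' : σ (μ.mate i) < σ i := lt_of_le_of_ne (not_lt.mp hc) hne
    have hp : pk σ μ i = μ.mate i := if_neg hc
    rw [hp] at hlt
    have hc2 : σ (μ.mate i) < σ (μ.mate (μ.mate i)) := by
      rw [μ.mate_invol]; exact hc'
    have H := hsd (μ.mate i) hc2 j hlt
    rw [μ.mate_invol] at H
    linarith [H.1]

/-- The serial dictatorship algorithm outputs a 4-person stable assignment. -/
theorem sd_is4PS (σ : A → ℕ) (hσ : Function.Injective σ)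
    (h : A → A → ℝ) (v : A → R → ℝ) (μ : Assignment A R)
    (hsd : SDInv σ h v μ) : is4PS h v μ := by
  intro i j hb
  obtain ⟨⟨hr, hi, hj⟩, hi', hj'⟩ := hb
  have hpq : pk σ μ i ≠ pk σ μ j := by
    intro e
    apply hr
    rw [← room_pk σ μ i, ← room_pk σ μ j, e]
  have hne : σ (pk σ μ i) ≠ σ (pk σ μ j) := fun e => hpq (hσ e)
  rcases hne.lt_or_gt with hlt | hlt
  · exact sd_key σ hσ h v μ hsd i j hlt hi hi'
  · exact sd_key σ hσ h v μ hsd j i hlt hj hj'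
end

section
/- When all agents' utilities over (roommate, room) pairs induce strict preferences, the assignment output by the serial dictatorship algorithm is Pareto optimal. -/
variable {A R : Type*}

lemma room_surj {n : ℕ} (μ : Assignment (Fin (2*n)) (Fin n)) :
    Function.Surjective μ.room := by
  have hfib : ∀ i : Fin (2*n),
      Finset.univ.filter (fun x => μ.room x = μ.room i) = {i, μ.mate i} := by
    intro i
    ext x
    simp only [Finset.mem_filter, Finset.mem_univ, true_and, Finset.mem_insert,
      Finset.mem_singleton]
    rw [eq_comm, μ.room_eq_iff i x]
  have hcard : (Finset.univ.image μ.room).card * 2 = 2 * n := by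
    have := Finset.card_eq_sum_card_fiberwise
      (f := μ.room) (s := (Finset.univ : Finset (Fin (2*n))))
      (t := Finset.univ.image μ.room) (fun x _ => Finset.mem_image_of_mem _ (Finset.mem_univ x))
    rw [Finset.card_univ, Fintype.card_fin] at this
    have hsum : ∑ b ∈ Finset.univ.image μ.room,
        (Finset.filter (fun a => μ.room a = b) Finset.univ).card
        = ∑ _b ∈ Finset.univ.image μ.room, 2 := by
      apply Finset.sum_congr rfl
      intro r hr
      obtain ⟨i, _, hi⟩ := Finset.mem_image.mp hr
      have hfr : Finset.filter (fun a => μ.room a = r) Finset.univ = {i, μ.mate i} := by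
        rw [← hi]; exact hfib i
      rw [hfr, Finset.card_pair (Ne.symm (μ.mate_ne_self i))]
    rw [hsum, Finset.sum_const, smul_eq_mul] at this
    omega
  have himg : (Finset.univ.image μ.room) = Finset.univ := by
    apply Finset.eq_univ_of_card
    rw [Fintype.card_fin]
    omega
  intro r
  have : r ∈ Finset.univ.image μ.room := by rw [himg]; exact Finset.mem_univ r
  obtain ⟨i, _, hi⟩ := Finset.mem_image.mp this
  exact ⟨i, hi⟩

/-- When utilities induce strict preferences (all happiness values over distinct
agents are distinct, and all room values over distinct rooms are distinct), the serial
dictatorship output is Pareto optimal. -/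
theorem sd_paretoOpt (n : ℕ) (σ : Fin (2*n) → ℕ) (hσ : Function.Injective σ)
    (h : Fin (2*n) → Fin (2*n) → ℝ) (v : Fin (2*n) → Fin n → ℝ)
    (hstrict : ∀ i, Function.Injective (h i) ∧ Function.Injective (v i))
    (μ : Assignment (Fin (2*n)) (Fin n)) (hsd : SDInv σ h v μ) :
    ParetoOpt h v μ := by
  rintro μ' ⟨hle, k, hk⟩
  have hsurj : Function.Surjective μ.room := room_surj μ
  have key : ∀ m : ℕ, ∀ i, σ i < m → μ'.mate i = μ.mate i ∧ μ'.room i = μ.room i := by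
    intro m
    induction m with
    | zero => intro i hi; omega
    | succ m ih =>
      intro i hi
      have IH : ∀ j, σ j < σ i → μ'.mate j = μ.mate j ∧ μ'.room j = μ.room j :=
        fun j hj => ih j (by omega)
      by_cases hpick : σ i < σ (μ.mate i)
      · -- i is the picker of its pair
        have hmle : h i (μ'.mate i) ≤ h i (μ.mate i) := by
          by_cases hji : μ'.mate i = μ.mate i
          · rw [hji]
          · set j := μ'.mate i with hjdef
            have hmjj : μ'.mate j = i := by rw [hjdef, μ'.mate_invol]
            have hpkj : σ i < σ (pk σ μ j) := by
              by_contra h1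
              push_neg at h1
              set p := pk σ μ j with hpdef
              have hjmem : p = j ∨ p = μ.mate j := by
                rw [hpdef]; unfold pk; split
                · left; rfl
                · right; rfl
              have hpne : p ≠ i := by
                intro hpi
                rcases hjmem with h2 | h2
                · exact μ'.mate_ne_self i (by rw [← hjdef, ← h2]; exact hpi)
                · apply hji
                  have : μ.mate j = i := by rw [← h2, hpi]
                  rw [← this, μ.mate_invol]
              have hplt : σ p < σ i :=
                lt_of_le_of_ne h1 (fun he => hpne (hσ he))
              rcases hjmem with h2 | h2
              · have hth := (IH p hplt).1
                rw [h2] at hth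
                rw [hmjj] at hth
                apply hji
                have : μ.mate i = j := by rw [hth, μ.mate_invol]
                exact this.symm
              · have hmp := (IH p hplt).1
                have hmp2 : μ'.mate p = j := by rw [hmp, h2, μ.mate_invol]
                apply hpne
                have h4 : μ'.mate (μ'.mate p) = μ'.mate j := by rw [hmp2]
                rw [μ'.mate_invol, hmjj] at h4
                exact h4
            exact (hsd i hpick j hpkj).1
        have hvle : v i (μ'.room i) ≤ v i (μ.room i) := by
          by_cases hri : μ'.room i = μ.room i
          · rw [hri]
          · obtain ⟨j, hjr⟩ := hsurj (μ'.room i)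
            have hpkj : σ i < σ (pk σ μ j) := by
              by_contra h1
              push_neg at h1
              set p := pk σ μ j with hpdef
              have hjmem : p = j ∨ p = μ.mate j := by
                rw [hpdef]; unfold pk; split
                · left; rfl
                · right; rfl
              have hpr : μ.room p = μ'.room i := by
                rcases hjmem with h2 | h2
                · rw [h2, hjr]
                · rw [h2, μ.room_mate, hjr]
              have hpne : p ≠ i := by
                intro hpi
                apply hri
                rw [hpi] at hpr
                exact hpr.symm
              have hplt : σ p < σ i :=
                lt_of_le_of_ne h1 (fun he => hpne (hσ he))
              obtain ⟨hmp, hrp⟩ := IH p hplt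
              have : μ'.room p = μ'.room i := by rw [hrp, hpr]
              rcases (μ'.room_eq_iff p i).mp this with h3 | h3
              · exact hpne h3.symm
              · rw [hmp] at h3
                apply hri
                rw [h3, μ.room_mate, hpr, h3]
            have := (hsd i hpick j hpkj).2
            rw [hjr] at this
            exact this
        have hge : util h v μ' i ≤ util h v μ i := add_le_add hmle hvle
        have heq : util h v μ' i = util h v μ i := le_antisymm hge (hle i)
        have hme : h i (μ'.mate i) = h i (μ.mate i) := by
          unfold util at heq
          linarith
        have hve : v i (μ'.room i) = v i (μ.room i) := by
          unfold util at heq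
          linarith
        exact ⟨(hstrict i).1 hme, (hstrict i).2 hve⟩
      · -- μ.mate i is the picker
        push_neg at hpick
        have hne : σ (μ.mate i) ≠ σ i := fun he => μ.mate_ne_self i (hσ he)
        have hlt : σ (μ.mate i) < σ i := lt_of_le_of_ne hpick hne
        obtain ⟨hm1, hm2⟩ := IH (μ.mate i) hlt
        rw [μ.mate_invol] at hm1
        -- hm1 : μ'.mate (μ.mate i) = i
        have hmate : μ'.mate i = μ.mate i := by
          have := μ'.mate_invol (μ.mate i)
          rw [hm1] at this
          exact this
        refine ⟨hmate, ?_⟩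
        calc μ'.room i = μ'.room (μ'.mate i) := (μ'.room_mate i).symm
          _ = μ'.room (μ.mate i) := by rw [hmate]
          _ = μ.room (μ.mate i) := hm2
          _ = μ.room i := μ.room_mate i
  have hall : ∀ i, util h v μ' i = util h v μ i := by
    intro i
    obtain ⟨h1, h2⟩ := key (σ i + 1) i (Nat.lt_succ_self _)
    unfold util
    rw [h1, h2]
  have := hall k
  linarith
end

section
/- The serial dictatorship mechanism for roommate matching is strategy-proof: no agent can strictly increase its utility (value of assigned roommate plus assigned room) by misreporting its happiness function over agents or valuation over rooms. -/
variable {A R : Type*} [DecidableEq A] [DecidableEq R]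

/-- Serial dictatorship: the first still-unmatched agent picks its most preferred remaining
agent and most preferred remaining room (ties broken by list position, a fixed
deterministic rule); the triple is removed and the process repeats. -/
noncomputable def sdList (h : A → A → ℝ) (v : A → R → ℝ) :
    List A → List R → List (A × A × R)
  | [], _ => []
  | a :: rest, rooms =>
    match rest.argmax (h a), rooms.argmax (v a) with
    | some m, some r => (a, m, r) :: sdList h v (rest.erase m) (rooms.erase r)
    | _, _ => []
  termination_by l _ => l.length
  decreasing_by
    simp only [List.length_cons]
    exact Nat.lt_succ_of_le (List.Sublist.length_le List.erase_sublist)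

/-- The (true) utility of agent `i` in the list of triples output by serial dictatorship:
its happiness for its roommate plus its value for its room. -/
noncomputable def utilIn (h : A → A → ℝ) (v : A → R → ℝ) (L : List (A × A × R)) (i : A) : ℝ :=
  match L.find? (fun t => t.1 == i || t.2.1 == i) with
  | some (x, y, r) => (if x = i then h i y else h i x) + v i r
  | none => 0

/-!
Until agent `i` moves, every agent that picks reports truthfully and faces the same remaining
agents and rooms, so the run with `i`'s misreport coincides with the truthful run; in
particular, if `i` is chosen as a roommate before its turn, its outcome is the same in both.
Otherwise `i` eventually picks from the same remaining agents and rooms, and since its utility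
is a term for the roommate plus a term for the room, picking a truthful maximiser of each is
optimal.
-/

section Utility

omit [DecidableEq R]

variable {h : A → A → ℝ} {v : A → R → ℝ} {L : List (A × A × R)} {x y i : A} {r : R}

lemma utilIn_cons_self : utilIn h v ((i, y, r) :: L) i = h i y + v i r := by
  simp [utilIn]

lemma utilIn_cons_of_snd_eq (hx : x ≠ i) : utilIn h v ((x, i, r) :: L) i = h i x + v i r := by
  simp [utilIn, hx]

lemma utilIn_cons_of_ne (hx : x ≠ i) (hy : y ≠ i) :
    utilIn h v ((x, y, r) :: L) i = utilIn h v L i := by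
  simp [utilIn, hx, hy]

end Utility

lemma List.exists_argmax_eq_some {α β : Type*} [LinearOrder β] (f : α → β) {l : List α}
    (hl : l ≠ []) : ∃ m, l.argmax f = some m :=
  Option.ne_none_iff_exists'.mp (List.argmax_eq_none.not.mpr hl)

section SerialDictatorship

variable {h : A → A → ℝ} {v : A → R → ℝ} {a m : A} {r : R} {rest : List A} {rooms : List R}

lemma sdList_cons_of_argmax (hm : rest.argmax (h a) = some m) (hr : rooms.argmax (v a) = some r) :
    sdList h v (a :: rest) rooms = (a, m, r) :: sdList h v (rest.erase m) (rooms.erase r) := by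
  rw [sdList, hm, hr]

lemma sdList_cons_of_eq_nil (h_nil : rest = [] ∨ rooms = []) :
    sdList h v (a :: rest) rooms = [] := by
  rcases h_nil with rfl | rfl <;> rw [sdList] <;> simp

lemma utilIn_sdList_cons_self_le (h₂ : A → A → ℝ) (v₂ : A → R → ℝ) (i : A) :
    utilIn h v (sdList h₂ v₂ (i :: rest) rooms) i ≤ utilIn h v (sdList h v (i :: rest) rooms) i := by
  by_cases h_nil : rest = [] ∨ rooms = []
  · rw [sdList_cons_of_eq_nil h_nil, sdList_cons_of_eq_nil h_nil]
  obtain ⟨hrest, hrooms⟩ := not_or.mp h_nil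
  obtain ⟨m, hm⟩ := List.exists_argmax_eq_some (h i) hrest
  obtain ⟨r, hr⟩ := List.exists_argmax_eq_some (v i) hrooms
  obtain ⟨m₂, hm₂⟩ := List.exists_argmax_eq_some (h₂ i) hrest
  obtain ⟨r₂, hr₂⟩ := List.exists_argmax_eq_some (v₂ i) hrooms
  rw [sdList_cons_of_argmax hm hr, sdList_cons_of_argmax hm₂ hr₂, utilIn_cons_self, utilIn_cons_self]
  exact add_le_add (List.le_of_mem_argmax (List.argmax_mem hm₂) hm)
    (List.le_of_mem_argmax (List.argmax_mem hr₂) hr)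

theorem utilIn_sdList_le_of_forall_ne {h₂ : A → A → ℝ} {v₂ : A → R → ℝ} {i : A}
    (hh : ∀ a ≠ i, h₂ a = h a) (hv : ∀ a ≠ i, v₂ a = v a) (agents : List A) (rooms : List R) :
    utilIn h v (sdList h₂ v₂ agents rooms) i ≤ utilIn h v (sdList h v agents rooms) i := by
  induction agents, rooms using sdList.induct h v with
  | case1 rooms => rw [sdList, sdList]
  | case2 a rest rooms m r hr hm ih =>
    by_cases hai : a = i
    · subst hai
      exact utilIn_sdList_cons_self_le h₂ v₂ a
    rw [sdList_cons_of_argmax hm hr,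
      sdList_cons_of_argmax (hh a hai ▸ hm) (hv a hai ▸ hr)]
    by_cases hmi : m = i
    · subst hmi
      rw [utilIn_cons_of_snd_eq hai, utilIn_cons_of_snd_eq hai]
    · rw [utilIn_cons_of_ne hai hmi, utilIn_cons_of_ne hai hmi]
      exact ih
  | case3 a rest rooms h_none =>
    have h_nil : rest = [] ∨ rooms = [] := by
      by_contra! h_ne
      obtain ⟨m, hm⟩ := List.exists_argmax_eq_some (h a) h_ne.1
      obtain ⟨r, hr⟩ := List.exists_argmax_eq_some (v a) h_ne.2
      exact h_none m r hm hr
    rw [sdList_cons_of_eq_nil h_nil, sdList_cons_of_eq_nil h_nil]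

end SerialDictatorship

theorem sd_strategyproof_general (agents : List A) (rooms : List R)
    (h : A → A → ℝ) (v : A → R → ℝ) (i : A) (h' : A → ℝ) (v' : R → ℝ) :
    utilIn h v (sdList (Function.update h i h') (Function.update v i v') agents rooms) i
      ≤ utilIn h v (sdList h v agents rooms) i :=
  utilIn_sdList_le_of_forall_ne (fun _ ha => Function.update_of_ne ha _ _)
    (fun _ ha => Function.update_of_ne ha _ _) agents rooms

/-- Serial dictatorship is strategy-proof: no agent can strictly increase its
true utility by misreporting its happiness function over agents or its valuation over
rooms, when all other agents report truthfully. -/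
theorem sd_strategyproof (agents : List A) (rooms : List R)
    (hagents : agents.Nodup) (hrooms : rooms.Nodup)
    (hlen : agents.length = 2 * rooms.length)
    (h : A → A → ℝ) (v : A → R → ℝ) (i : A) (h' : A → ℝ) (v' : R → ℝ) :
    utilIn h v (sdList (Function.update h i h') (Function.update v i v') agents rooms) i
      ≤ utilIn h v (sdList h v agents rooms) i :=
  sd_strategyproof_general agents rooms h v i h' v'
end

section
/- In the contractual top trading cycle (CTTC) procedure, resolving a trading cycle strictly increases the social welfare of the assignment. -/
variable {A R : Type*}

/-- Utility agent `i` would get by swapping places with agent `s`. -/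
def swapUtil (h : A → A → ℝ) (v : A → R → ℝ) (μ : Assignment A R) (i s : A) : ℝ :=
  h i (μ.mate s) + v i (μ.room s)

/-- Contractual arc: `i` points to `j` when swapping with `j` strictly improves `i`,
maximizes `i`'s utility among all swaps, and `j`'s roommate weakly prefers `i` to `j`. -/
def CTTCarc (h : A → A → ℝ) (v : A → R → ℝ) (μ : Assignment A R) (i j : A) : Prop :=
  j ≠ i ∧ j ≠ μ.mate i ∧
  swapUtil h v μ i j > util h v μ i ∧
  (∀ s, s ≠ i → s ≠ μ.mate i → swapUtil h v μ i s ≤ swapUtil h v μ i j) ∧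
  h (μ.mate j) i ≥ h (μ.mate j) j

/-- In the CTTC procedure, resolving a trading cycle (each cycle agent takes
the room and roommate of its successor, everyone else keeps their room, and agents not
involved keep their roommate) strictly increases social welfare. -/
theorem cttc_cycle_increases_SW [Fintype A] (h : A → A → ℝ) (v : A → R → ℝ)
    (μ μ' : Assignment A R) (k : ℕ) (c : Fin (k + 2) → A)
    (hinj : Function.Injective c)
    (harc : ∀ t, CTTCarc h v μ (c t) (c (t + 1)))
    (hcyc : ∀ t, μ'.mate (c t) = μ.mate (c (t + 1)) ∧ μ'.room (c t) = μ.room (c (t + 1)))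
    (hfix : ∀ a, (∀ t, a ≠ c t) → μ'.room a = μ.room a ∧
      ((∀ t, μ.mate a ≠ c t) → μ'.mate a = μ.mate a)) :
    SW h v μ < SW h v μ' := by
  have key : ∀ a, util h v μ a ≤ util h v μ' a := by
    intro a
    by_cases hc : ∃ t, a = c t
    · obtain ⟨t, rfl⟩ := hc
      have h1 := (hcyc t).1
      have h2 := (hcyc t).2
      have h3 := (harc t).2.2.1
      simp only [util, swapUtil] at *
      rw [h1, h2]; linarith
    · push_neg at hc
      obtain ⟨hr, hm⟩ := hfix a hc
      by_cases hmc : ∃ t, μ.mate a = c t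
      · obtain ⟨t, ht⟩ := hmc
        have hmate : μ'.mate a = c (t - 1) := by
          have e1 : μ'.mate (c (t-1)) = a := by
            rw [(hcyc (t-1)).1, sub_add_cancel, ← ht, μ.mate_invol]
          rw [← e1, μ'.mate_invol]
        have harc' := (harc (t-1)).2.2.2.2
        rw [sub_add_cancel, ← ht, μ.mate_invol] at harc'
        simp only [util]
        rw [hmate, hr]
        linarith
      · push_neg at hmc
        have hme := hm hmc
        simp [util, hme, hr]
  have strict : util h v μ (c 0) < util h v μ' (c 0) := by
    have h1 := (hcyc 0).1
    have h2 := (hcyc 0).2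
    have h3 := (harc 0).2.2.1
    simp only [util, swapUtil] at *
    rw [h1, h2]; linarith
  exact Finset.sum_lt_sum (fun i _ => key i) ⟨c 0, Finset.mem_univ _, strict⟩
end

section
/- The CTTCR algorithm outputs a 4-person stable assignment: when the algorithm terminates (all agents removed because none has an outgoing contractual arc, with removed agents re-added whenever social welfare changes), the resulting assignment has no 4PS blocking pair. -/
variable {A R : Type*}

/-- Arc of the CTTCR trading graph over the full agent set: `i` points to `j` when the swap
with `j` strictly improves `i`, `j`'s roommate consents (weakly prefers `i` to `j`), and
`j` maximizes `i`'s utility among all consenting swap partners. -/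
def CTTCRarc (h : A → A → ℝ) (v : A → R → ℝ) (μ : Assignment A R) (i j : A) : Prop :=
  j ≠ i ∧ j ≠ μ.mate i ∧
  swapUtil h v μ i j > util h v μ i ∧
  h (μ.mate j) i ≥ h (μ.mate j) j ∧
  ∀ s, s ≠ i → s ≠ μ.mate i → h (μ.mate s) i ≥ h (μ.mate s) s →
    swapUtil h v μ i s ≤ swapUtil h v μ i j

/-- The CTTCR algorithm outputs a 4-person stable assignment: at termination
no agent has an outgoing contractual arc in the trading graph over all agents, and any
assignment with this property has no 4PS blocking pair. -/
theorem cttcr_is4PS [Fintype A] (h : A → A → ℝ) (v : A → R → ℝ) (μ : Assignment A R)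
    (hterm : ∀ i j, ¬ CTTCRarc h v μ i j) : is4PS h v μ := by
  classical
  intro i j hbp
  obtain ⟨⟨hroom, hi, hj⟩, hmi, hmj⟩ := hbp
  have hji : j ≠ i := by rintro rfl; exact hroom rfl
  have hjm : j ≠ μ.mate i := by
    rintro rfl; exact hroom (μ.room_mate i).symm
  have hjcons : h (μ.mate j) i ≥ h (μ.mate j) j := le_of_lt hmj
  set S : Finset A := Finset.univ.filter
    (fun s => s ≠ i ∧ s ≠ μ.mate i ∧ h (μ.mate s) i ≥ h (μ.mate s) s) with hS
  have hjS : j ∈ S := by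
    simp only [hS, Finset.mem_filter, Finset.mem_univ, true_and]
    exact ⟨hji, hjm, hjcons⟩
  obtain ⟨m, hmS, hmax⟩ := S.exists_max_image (swapUtil h v μ i) ⟨j, hjS⟩
  simp only [hS, Finset.mem_filter, Finset.mem_univ, true_and] at hmS
  obtain ⟨hm1, hm2, hm3⟩ := hmS
  refine hterm i m ⟨hm1, hm2, ?_, hm3, ?_⟩
  · calc util h v μ i < swapUtil h v μ i j := hi
      _ ≤ swapUtil h v μ i m := hmax j hjS
  · intro s hs1 hs2 hs3
    exact hmax s (by simp only [hS, Finset.mem_filter, Finset.mem_univ, true_and]; exact ⟨hs1, hs2, hs3⟩)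
end

section
/- If valuations are symmetric (h_i(j) = h_j(i) for all i,j) and binary (all h and v values in {0,1}), then swapping the two agents of any 2PS blocking pair does not decrease the social welfare of the assignment; specifically SW(μ') − SW(μ) = (h_c(b) − h_c(d)) + (h_a(d) − h_a(b)) + X ≥ 0, where X ≥ 2 is the sum of the slacks of the two strict blocking inequalities. -/
variable {A R : Type*}

lemma bingap {p q r s : ℝ} (hp : p = 0 ∨ p = 1) (hq : q = 0 ∨ q = 1)
    (hr : r = 0 ∨ r = 1) (hs : s = 0 ∨ s = 1) (hlt : r + s < p + q) :
    r + s + 1 ≤ p + q := by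
  rcases hp with hp|hp <;> rcases hq with hq|hq <;> rcases hr with hr|hr <;>
    rcases hs with hs|hs <;> linarith

/-- With symmetric, binary valuations, swapping the two agents of a 2PS
blocking pair does not decrease social welfare: the slack `X` of the two strict blocking
inequalities is at least 2, and SW(μ') − SW(μ) = (h_c(b) − h_c(d)) + (h_a(d) − h_a(b)) + X ≥ 0. -/
theorem symmetric_binary_swap_SW [Fintype A] (h : A → A → ℝ) (v : A → R → ℝ)
    (hsym : ∀ i j, h i j = h j i)
    (hbin : ∀ i j, h i j = 0 ∨ h i j = 1) (vbin : ∀ i r, v i r = 0 ∨ v i r = 1)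
    (μ μ' : Assignment A R) (a b c d : A) (r1 r2 : R)
    (hab : μ.mate a = b) (hcd : μ.mate c = d)
    (har : μ.room a = r1) (hcr : μ.room c = r2)
    (hblock : blocking2PS h v μ a c)
    (hswap : IsSwap μ μ' a c) :
    2 ≤ (h a d + v a r2 + h c b + v c r1) - (h a b + v a r1 + h c d + v c r2) ∧
    SW h v μ' - SW h v μ
      = (h c b - h c d) + (h a d - h a b)
        + ((h a d + v a r2 + h c b + v c r1) - (h a b + v a r1 + h c d + v c r2)) ∧
    SW h v μ ≤ SW h v μ' := by
  classical
  obtain ⟨hroomne, H1, H2⟩ := hblock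
  rw [hab, hcd, har, hcr] at H1 H2
  obtain ⟨hm'a, hr'a, hm'c, hr'c, hr'b0, hr'd0, hrest⟩ := hswap
  rw [hcd] at hm'a
  rw [hcr] at hr'a
  rw [hab] at hm'c
  rw [har] at hr'c
  rw [hab, har] at hr'b0
  rw [hcd, hcr] at hr'd0
  have hm'b : μ'.mate b = c := by
    have := μ'.mate_invol c; rw [hm'c] at this; exact this
  have hm'd : μ'.mate d = a := by
    have := μ'.mate_invol a; rw [hm'a] at this; exact this
  have hr12 : r1 ≠ r2 := by rw [← har, ← hcr]; exact hroomne
  have mateb : μ.mate b = a := by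
    have := μ.mate_invol a; rw [hab] at this; exact this
  have mated : μ.mate d = c := by
    have := μ.mate_invol c; rw [hcd] at this; exact this
  have roomb : μ.room b = r1 := by rw [← hab, μ.room_mate, har]
  have roomd : μ.room d = r2 := by rw [← hcd, μ.room_mate, hcr]
  have hba : b ≠ a := by rw [← hab]; exact μ.mate_ne_self a
  have hdc : d ≠ c := by rw [← hcd]; exact μ.mate_ne_self c
  have hac : a ≠ c := by intro e; exact hroomne (by rw [e])
  have had : a ≠ d := by intro e; exact hr12 (by rw [← har, e, roomd])
  have hbc : b ≠ c := by intro e; exact hr12 (by rw [← roomb, e, hcr])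
  have hbd : b ≠ d := by intro e; exact hr12 (by rw [← roomb, e, roomd])
  have X2 : 2 ≤ (h a d + v a r2 + h c b + v c r1) - (h a b + v a r1 + h c d + v c r2) := by
    have G1 := bingap (hbin a d) (vbin a r2) (hbin a b) (vbin a r1) H1
    have G2 := bingap (hbin c b) (vbin c r1) (hbin c d) (vbin c r2) H2
    linarith
  have hSW : SW h v μ' - SW h v μ
      = (h c b - h c d) + (h a d - h a b)
        + ((h a d + v a r2 + h c b + v c r1) - (h a b + v a r1 + h c d + v c r2)) := by
    have hsum : SW h v μ' - SW h v μ
        = ∑ i, (util h v μ' i - util h v μ i) := by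
      rw [SW, SW, Finset.sum_sub_distrib]
    rw [hsum]
    have hss : ({a, b, c, d} : Finset A) ⊆ Finset.univ := Finset.subset_univ _
    have hzero : ∀ x ∈ Finset.univ, x ∉ ({a, b, c, d} : Finset A) →
        util h v μ' x - util h v μ x = 0 := by
      intro x _ hx
      simp only [Finset.mem_insert, Finset.mem_singleton, not_or] at hx
      obtain ⟨hxa, hxb, hxc, hxd⟩ := hx
      obtain ⟨hmk, hrk⟩ := hrest x hxa hxc (by rw [hab]; exact hxb) (by rw [hcd]; exact hxd)
      rw [util, util, hmk, hrk]; ring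
    rw [← Finset.sum_subset hss hzero]
    have habm : a ∉ ({b, c, d} : Finset A) := by
      simp only [Finset.mem_insert, Finset.mem_singleton, not_or]
      exact ⟨fun e => hba e.symm, hac, had⟩
    have hbm : b ∉ ({c, d} : Finset A) := by
      simp only [Finset.mem_insert, Finset.mem_singleton, not_or]
      exact ⟨hbc, hbd⟩
    have hcm : c ∉ ({d} : Finset A) := by
      simp only [Finset.mem_singleton]
      exact fun e => hdc e.symm
    rw [show ({a, b, c, d} : Finset A) = insert a (insert b (insert c {d})) from rfl,
      Finset.sum_insert habm, Finset.sum_insert hbm, Finset.sum_insert hcm,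
      Finset.sum_singleton]
    simp only [util, hm'a, hr'a, hm'b, hr'b0, hm'c, hr'c, hm'd, hr'd0,
      hab, har, hcd, hcr, roomb, roomd, mateb, mated]
    rw [hsym b c, hsym b a, hsym d a, hsym d c]
    ring
  refine ⟨X2, hSW, ?_⟩
  rcases hbin c b with e1|e1 <;> rcases hbin c d with e2|e2 <;>
    rcases hbin a d with e3|e3 <;> rcases hbin a b with e4|e4 <;> linarith
end

section
/- Under symmetric binary valuations, the swapping algorithm (repeatedly resolve an arbitrary 2PS blocking pair by swapping its two agents) terminates after at most 4n swaps, and the final assignment is 2-person stable (and hence also 4-person stable). -/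
variable {A R : Type*}

/-- One step of the swapping algorithm: some 2PS blocking pair is resolved by swapping. -/
def SwapStep (h : A → A → ℝ) (v : A → R → ℝ) (μ μ' : Assignment A R) : Prop :=
  ∃ i j, blocking2PS h v μ i j ∧ IsSwap μ μ' i j

section Aux

lemma bin01 {x : ℝ} (hx : x = 0 ∨ x = 1) : 0 ≤ x ∧ x ≤ 1 := by
  rcases hx with h | h <;> simp [h]

lemma bin_gap {a b c d : ℝ} (ha : a = 0 ∨ a = 1) (hb : b = 0 ∨ b = 1)
    (hc : c = 0 ∨ c = 1) (hd : d = 0 ∨ d = 1) (hlt : c + d < a + b) :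
    c + d + 1 ≤ a + b := by
  rcases ha with ha | ha <;> rcases hb with hb | hb <;>
    rcases hc with hc | hc <;> rcases hd with hd | hd <;>
    subst ha <;> subst hb <;> subst hc <;> subst hd <;> linarith

lemma swap_SW {n : ℕ}
    (h : Fin (2 * n) → Fin (2 * n) → ℝ) (v : Fin (2 * n) → Fin n → ℝ)
    (hsym : ∀ i j, h i j = h j i)
    (hbin : ∀ i j, h i j = 0 ∨ h i j = 1) (vbin : ∀ i r, v i r = 0 ∨ v i r = 1)
    {μ μ' : Assignment (Fin (2 * n)) (Fin n)}
    (hs : SwapStep h v μ μ') : SW h v μ + 1 ≤ SW h v μ' := by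
  obtain ⟨i, j, hb, hm1, hr1, hm2, hr2, hra, hrb, hoth⟩ := hs
  set a := μ.mate i with ha_def
  set b := μ.mate j with hb_def
  have hma : μ'.mate a = j := by rw [← hm2, μ'.mate_invol]
  have hmb : μ'.mate b = i := by rw [← hm1, μ'.mate_invol]
  have hroomij : μ.room i ≠ μ.room j := hb.1
  have hroa : μ.room a = μ.room i := μ.room_mate i
  have hrob : μ.room b = μ.room j := μ.room_mate j
  have hij : i ≠ j := fun e => hroomij (by rw [e])
  have hia : i ≠ a := (μ.mate_ne_self i).symm
  have hjb : j ≠ b := (μ.mate_ne_self j).symm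
  have hib : i ≠ b := fun e => hroomij (by rw [e, hrob])
  have hja : j ≠ a := fun e => hroomij (by rw [e, hroa])
  have hab : a ≠ b := fun e => hroomij (by rw [← hroa, e, hrob])
  have hmua : μ.mate a = i := by rw [ha_def, μ.mate_invol]
  have hmub : μ.mate b = j := by rw [hb_def, μ.mate_invol]
  -- utility differences
  have gi : util h v μ' i - util h v μ i
      = h i b + v i (μ.room j) - (h i a + v i (μ.room i)) := by
    simp [util, hm1, hr1, ha_def, hb_def]
  have gj : util h v μ' j - util h v μ j
      = h j a + v j (μ.room i) - (h j b + v j (μ.room j)) := by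
    simp [util, hm2, hr2, ha_def, hb_def]
  have ga : util h v μ' a - util h v μ a = h a j - h a i := by
    simp [util, hma, hra, hmua, hroa]
  have gb : util h v μ' b - util h v μ b = h b i - h b j := by
    simp [util, hmb, hrb, hmub, hrob]
  have hzero : ∀ k : Fin (2 * n), k ∉ ({i, j, a, b} : Finset (Fin (2 * n))) →
      util h v μ' k - util h v μ k = 0 := by
    intro k hk
    simp only [Finset.mem_insert, Finset.mem_singleton, not_or] at hk
    obtain ⟨hk1, hk2, hk3, hk4⟩ := hk
    obtain ⟨e1, e2⟩ := hoth k hk1 hk2 hk3 hk4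
    simp [util, e1, e2]
  have hsum : SW h v μ' - SW h v μ = ∑ k, (util h v μ' k - util h v μ k) := by
    simp [SW, Finset.sum_sub_distrib]
  have hsub : ∑ k, (util h v μ' k - util h v μ k)
      = ∑ k ∈ ({i, j, a, b} : Finset (Fin (2 * n))), (util h v μ' k - util h v μ k) := by
    refine (Finset.sum_subset (Finset.subset_univ _) ?_).symm
    intro k _ hk
    exact hzero k hk
  have hexp : ∑ k ∈ ({i, j, a, b} : Finset (Fin (2 * n))), (util h v μ' k - util h v μ k)
      = (util h v μ' i - util h v μ i) + (util h v μ' j - util h v μ j)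
        + (util h v μ' a - util h v μ a) + (util h v μ' b - util h v μ b) := by
    rw [Finset.sum_insert (by simp [hij, hia, hib]),
        Finset.sum_insert (by simp [hja, hjb]),
        Finset.sum_insert (by simp [hab]), Finset.sum_singleton]
    ring
  -- blocking gives integer gaps
  have hgi : h i a + v i (μ.room i) + 1 ≤ h i b + v i (μ.room j) :=
    bin_gap (hbin i b) (vbin i (μ.room j)) (hbin i a) (vbin i (μ.room i))
      (by have := hb.2.1; rw [← ha_def, ← hb_def] at this; linarith)
  have hgj : h j b + v j (μ.room j) + 1 ≤ h j a + v j (μ.room i) :=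
    bin_gap (hbin j a) (vbin j (μ.room i)) (hbin j b) (vbin j (μ.room j))
      (by have := hb.2.2; rw [← ha_def, ← hb_def] at this; linarith)
  have hs1 : h a j = h j a := hsym a j
  have hs2 : h a i = h i a := hsym a i
  have hs3 : h b i = h i b := hsym b i
  have hs4 : h b j = h j b := hsym b j
  have hv1 := bin01 (vbin i (μ.room i))
  have hv2 := bin01 (vbin i (μ.room j))
  have hv3 := bin01 (vbin j (μ.room i))
  have hv4 := bin01 (vbin j (μ.room j))
  have key : SW h v μ' - SW h v μ
      = (util h v μ' i - util h v μ i) + (util h v μ' j - util h v μ j)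
        + (util h v μ' a - util h v μ a) + (util h v μ' b - util h v μ b) := by
    rw [hsum, hsub, hexp]
  rw [gi, gj, ga, gb] at key
  have := hv1.1; have := hv1.2
  linarith [hv1.1, hv1.2, hv2.1, hv2.2, hv3.1, hv3.2, hv4.1, hv4.2]

lemma SW_nonneg {n : ℕ}
    (h : Fin (2 * n) → Fin (2 * n) → ℝ) (v : Fin (2 * n) → Fin n → ℝ)
    (hbin : ∀ i j, h i j = 0 ∨ h i j = 1) (vbin : ∀ i r, v i r = 0 ∨ v i r = 1)
    (μ : Assignment (Fin (2 * n)) (Fin n)) : 0 ≤ SW h v μ := by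
  apply Finset.sum_nonneg
  intro k _
  have h1 := bin01 (hbin k (μ.mate k))
  have h2 := bin01 (vbin k (μ.room k))
  simp only [util]
  linarith [h1.1, h2.1]

lemma SW_le {n : ℕ}
    (h : Fin (2 * n) → Fin (2 * n) → ℝ) (v : Fin (2 * n) → Fin n → ℝ)
    (hbin : ∀ i j, h i j = 0 ∨ h i j = 1) (vbin : ∀ i r, v i r = 0 ∨ v i r = 1)
    (μ : Assignment (Fin (2 * n)) (Fin n)) : SW h v μ ≤ 4 * n := by
  have : SW h v μ ≤ ∑ _k : Fin (2 * n), (2 : ℝ) := by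
    apply Finset.sum_le_sum
    intro k _
    have h1 := bin01 (hbin k (μ.mate k))
    have h2 := bin01 (vbin k (μ.room k))
    simp only [util]
    linarith [h1.2, h2.2]
  have h2 : (∑ _k : Fin (2 * n), (2 : ℝ)) = 4 * n := by
    simp [Finset.sum_const, Finset.card_univ]
    ring
  linarith

end Aux
/-- Under symmetric binary valuations, the swapping algorithm (repeatedly
resolve an arbitrary 2PS blocking pair) terminates after at most 4n swaps with a
2-person stable assignment; moreover 2-person stability implies 4-person stability. -/
theorem swapping_algorithm_2PS (n : ℕ)
    (h : Fin (2 * n) → Fin (2 * n) → ℝ) (v : Fin (2 * n) → Fin n → ℝ)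
    (hsym : ∀ i j, h i j = h j i)
    (hbin : ∀ i j, h i j = 0 ∨ h i j = 1) (vbin : ∀ i r, v i r = 0 ∨ v i r = 1) :
    (∀ f : ℕ → Assignment (Fin (2 * n)) (Fin n),
      (∀ m, (∃ i j, blocking2PS h v (f m) i j) → SwapStep h v (f m) (f (m + 1))) →
      (∀ m, ¬ (∃ i j, blocking2PS h v (f m) i j) → f (m + 1) = f m) →
      ∃ m ≤ 4 * n, is2PS h v (f m) ∧ is4PS h v (f m)) ∧
    (∀ μ : Assignment (Fin (2 * n)) (Fin n), is2PS h v μ → is4PS h v μ) := by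
  constructor
  · intro f hstep _hstall
    by_contra hcon
    have hblock : ∀ m, m ≤ 4 * n → ∃ i j, blocking2PS h v (f m) i j := by
      intro m hm
      by_contra hnb
      have st : is2PS h v (f m) := fun i j hb => hnb ⟨i, j, hb⟩
      exact hcon ⟨m, hm, st, fun i j hb4 => st i j hb4.1⟩
    have hmono : ∀ m, m ≤ 4 * n + 1 → (m : ℝ) ≤ SW h v (f m) := by
      intro m
      induction m with
      | zero => intro _; simpa using SW_nonneg h v hbin vbin (f 0)
      | succ m ih =>
        intro hm
        have hm' : m ≤ 4 * n := by omega
        have hb := hblock m hm'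
        have hsw := hstep m hb
        have h1 := swap_SW h v hsym hbin vbin hsw
        have h2 := ih (by omega)
        push_cast
        linarith
    have h1 := hmono (4 * n + 1) le_rfl
    have h2 := SW_le h v hbin vbin (f (4 * n + 1))
    push_cast at h1
    linarith
  · intro μ h2 i j hb4
    exact h2 i j hb4.1
end
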